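/- The function k_σ(x,y,t;x′,y′,t′) = (1/(1/σ² + 2(t+t′))) · exp(−((x−x′)² + (y−y′)²)/(2(1/σ² + 2(t+t′)))) satisfies the two-dimensional heat equation ∂ₓ²k + ∂_y²k = ∂ₜk in the variables (x,y,t), for every σ > 0 and all arguments with 1/σ² + 2(t+t′) > 0. -/

import Mathlib

/-- The EPGP covariance kernel for the 2D heat equation with scale parameter σ². -/
noncomputable def heatKernel2D (σ x y t x' y' t' : ℝ) : ℝ :=
  (1 / (1 / σ ^ 2 + 2 * (t + t'))) *
    Real.exp (-((x - x') ^ 2 + (y - y') ^ 2) / (2 * (1 / σ ^ 2 + 2 * (t + t'))))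

/-!
Write `c = 1/σ² + 2(t + t')` and `r² = (x - x')² + (y - y')²`, so that `k = c⁻¹ exp(-r²/(2c))`.
Each spatial second derivative multiplies `k` by `(x - x')²/c² - 1/c` (resp. with `y`), while `t`
enters only through `c`, with `∂ₜc = 2` and `∂_c k = (r²/(2c²) - 1/c) k`. Both sides of the heat
equation therefore equal `(r²/c² - 2/c) k`.
-/

open Real

section Gaussian

variable (p C c : ℝ)

theorem hasDerivAt_exp_neg_sq_div (a : ℝ) :
    HasDerivAt (fun a => exp (-((a - p) ^ 2 + C) / (2 * c)))
      (-(a - p) / c * exp (-((a - p) ^ 2 + C) / (2 * c))) a := by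
  have hsq : HasDerivAt (fun a => (a - p) ^ 2 + C) (2 * (a - p)) a := by
    simpa using (((hasDerivAt_id a).sub_const p).pow 2).add_const C
  have hq : HasDerivAt (fun a => -((a - p) ^ 2 + C) / (2 * c)) (-(a - p) / c) a := by
    refine (hsq.neg.div_const (2 * c)).congr_deriv ?_
    rw [neg_div, neg_div, mul_div_mul_left _ _ two_ne_zero]
  exact hq.exp.congr_deriv (mul_comm _ _)

theorem deriv_deriv_exp_neg_sq_div (a : ℝ) :
    deriv (deriv fun a => exp (-((a - p) ^ 2 + C) / (2 * c))) a
      = ((a - p) ^ 2 / c ^ 2 - 1 / c) * exp (-((a - p) ^ 2 + C) / (2 * c)) := by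
  have hlin : HasDerivAt (fun a => -(a - p) / c) (-1 / c) a := by
    simpa using ((hasDerivAt_id a).sub_const p).neg.div_const c
  rw [funext fun a => (hasDerivAt_exp_neg_sq_div p C c a).deriv]
  exact (hlin.mul (hasDerivAt_exp_neg_sq_div p C c a)).deriv.trans (by ring)

theorem hasDerivAt_one_div_mul_exp_neg_div (R : ℝ) (hc : c ≠ 0) :
    HasDerivAt (fun c => 1 / c * exp (-R / (2 * c)))
      ((R / (2 * c ^ 2) - 1 / c) * (1 / c * exp (-R / (2 * c)))) c := by
  have hinv : HasDerivAt (fun c : ℝ => 1 / c) (-1 / c ^ 2) c := by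
    simpa [one_div, neg_div] using hasDerivAt_inv hc
  have htwice : HasDerivAt (fun c : ℝ => 2 * c) 2 c := by
    simpa using (hasDerivAt_id c).const_mul 2
  have hexp : HasDerivAt (fun c => -R / (2 * c)) (R / (2 * c ^ 2)) c :=
    ((hasDerivAt_const c (-R)).div htwice (mul_ne_zero two_ne_zero hc)).congr_deriv
      (by field_simp; ring)
  exact (hinv.mul hexp.exp).congr_deriv (by field_simp; ring)

end Gaussian

section HeatKernel

variable (σ x y t x' y' t' : ℝ)

theorem deriv_deriv_heatKernel2D_x :
    deriv (deriv fun a => heatKernel2D σ a y t x' y' t') x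
      = ((x - x') ^ 2 / (1 / σ ^ 2 + 2 * (t + t')) ^ 2 - 1 / (1 / σ ^ 2 + 2 * (t + t')))
        * heatKernel2D σ x y t x' y' t' := by
  simp only [heatKernel2D, deriv_const_mul_field', deriv_deriv_exp_neg_sq_div]
  ring

theorem deriv_deriv_heatKernel2D_y :
    deriv (deriv fun b => heatKernel2D σ x b t x' y' t') y
      = ((y - y') ^ 2 / (1 / σ ^ 2 + 2 * (t + t')) ^ 2 - 1 / (1 / σ ^ 2 + 2 * (t + t')))
        * heatKernel2D σ x y t x' y' t' := by
  simp only [heatKernel2D, add_comm ((x - x') ^ 2), deriv_const_mul_field',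
    deriv_deriv_exp_neg_sq_div]
  ring

theorem hasDerivAt_heatKernel2D_t (hc : 1 / σ ^ 2 + 2 * (t + t') ≠ 0) :
    HasDerivAt (fun s => heatKernel2D σ x y s x' y' t')
      ((((x - x') ^ 2 + (y - y') ^ 2) / (1 / σ ^ 2 + 2 * (t + t')) ^ 2
        - 2 / (1 / σ ^ 2 + 2 * (t + t'))) * heatKernel2D σ x y t x' y' t') t := by
  have hscale : HasDerivAt (fun s => 1 / σ ^ 2 + 2 * (s + t')) 2 t := by
    simpa using ((hasDerivAt_id t).add_const t').const_mul 2 |>.const_add (1 / σ ^ 2)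
  refine ((hasDerivAt_one_div_mul_exp_neg_div _ _ hc).comp t hscale).congr_deriv ?_
  unfold heatKernel2D
  generalize 1 / σ ^ 2 + 2 * (t + t') = c at hc ⊢
  field_simp

end HeatKernel

theorem heatKernel2D_satisfies_heat_equation_general (σ x y t x' y' t' : ℝ)
    (h : 1 / σ ^ 2 + 2 * (t + t') > 0) :
    deriv (deriv (fun a : ℝ => heatKernel2D σ a y t x' y' t')) x
      + deriv (deriv (fun b : ℝ => heatKernel2D σ x b t x' y' t')) y
      = deriv (fun s : ℝ => heatKernel2D σ x y s x' y' t') t := by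
  rw [deriv_deriv_heatKernel2D_x, deriv_deriv_heatKernel2D_y,
    (hasDerivAt_heatKernel2D_t σ x y t x' y' t' h.ne').deriv]
  ring

/-- The 2D EPGP heat kernel satisfies ∂ₓ²k + ∂_y²k = ∂ₜk in (x,y,t),
    whenever σ > 0 and 1/σ² + 2(t+t') > 0. -/
theorem heatKernel2D_satisfies_heat_equation (σ x y t x' y' t' : ℝ)
    (hσ : σ > 0) (h : 1 / σ ^ 2 + 2 * (t + t') > 0) :
    deriv (deriv (fun a : ℝ => heatKernel2D σ a y t x' y' t')) x
      + deriv (deriv (fun b : ℝ => heatKernel2D σ x b t x' y' t')) y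
      = deriv (fun s : ℝ => heatKernel2D σ x y s x' y' t') t :=
  heatKernel2D_satisfies_heat_equation_general σ x y t x' y' t' h
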